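/- Let p > 1, c₁ > 0 and let k ≥ 2 be an integer. Then there exists a unique vector (ᾱ₁,…,ᾱ_k) ∈ ℝ^k with ᾱ₁ + ⋯ + ᾱ_k = 0 such that the functions ζ̄_i(s) = ( i − (k+1)/2 ) · ((p−1)/2) · log s + ᾱ_i, for i = 1,…,k, satisfy for all s > 0 and all i ∈ {1,…,k}: (1/c₁) ζ̄_i'(s) = e^{ −(2/(p−1))( ζ̄_i(s) − ζ̄_{i−1}(s) ) } − e^{ −(2/(p−1))( ζ̄_{i+1}(s) − ζ̄_i(s) ) }, where by convention the first exponential term is replaced by 0 when i = 1 and the second exponential term is replaced by 0 when i = k. -/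

import Mathlib

open Real

/-!
Each `ζ̄_i` is affine in `log s` with slope `λ_i = (i - (k+1)/2)(p-1)/2`, and consecutive slopes
differ by `(p-1)/2`, so every exponential on the right-hand side is `s⁻¹` times its value at
`s = 1`: the system holds for all `s > 0` iff it holds at `s = 1`. There it is the linear
recursion `c₁ (w_{i-1} - w_i) = λ_i`, `w_0 = w_k = 0`, for `w_j = e^{-(2/(p-1))(ᾱ_{j+1} - ᾱ_j)}`,
whose unique solution `w_j = (p-1) j (k-j) / (4c₁)` is positive for `0 < j < k`. This prescribes
every consecutive difference `ᾱ_{j+1} - ᾱ_j`, and the zero sum fixes the remaining constant.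
-/

noncomputable def zbar (p : ℝ) (k : ℕ) (α : Fin k → ℝ) (i : ℕ) (s : ℝ) : ℝ :=
  ((i : ℝ) - ((k : ℝ) + 1) / 2) * ((p - 1) / 2) * Real.log s
    + (if h : 1 ≤ i ∧ i ≤ k then α ⟨i - 1, by omega⟩ else 0)

section ConsecutiveDifferences

variable {K : Type*} [Field K] [CharZero K] {n : ℕ}

theorem Fin.eq_of_sum_eq_of_sub_eq {α β : Fin (n + 1) → K} (hsum : ∑ i, α i = ∑ i, β i)
    (hsub : ∀ j : Fin n, α j.succ - α j.castSucc = β j.succ - β j.castSucc) : α = β := by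
  have hconst : ∀ i, α i - β i = α 0 - β 0 :=
    Fin.induction rfl fun j ih => by rw [← ih]; linear_combination hsub j
  have hzero : α 0 - β 0 = 0 := by
    have h := Finset.sum_congr rfl fun i (_ : i ∈ Finset.univ) => hconst i
    rw [Finset.sum_sub_distrib, hsum, sub_self, Finset.sum_const, Finset.card_univ,
      Fintype.card_fin, nsmul_eq_mul] at h
    exact (mul_eq_zero.mp h.symm).resolve_left (by exact_mod_cast n.succ_ne_zero)
  funext i
  exact sub_eq_zero.mp ((hconst i).trans hzero)

theorem Fin.existsUnique_sum_eq_zero_and_sub_eq (d : Fin n → K) :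
    ∃! α : Fin (n + 1) → K, ∑ i, α i = 0 ∧ ∀ j : Fin n, α j.succ - α j.castSucc = d j := by
  obtain ⟨α, hsum, hsub⟩ :
      ∃ α : Fin (n + 1) → K, ∑ i, α i = 0 ∧ ∀ j : Fin n, α j.succ - α j.castSucc = d j := by
    have hn : (n + 1 : K) ≠ 0 := by exact_mod_cast n.succ_ne_zero
    refine ⟨fun i => partialSum d i - (n + 1 : K)⁻¹ * ∑ i, partialSum d i, ?_, fun j => ?_⟩
    · simp only [Finset.sum_sub_distrib, Finset.sum_const, Finset.card_univ, Fintype.card_fin,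
        nsmul_eq_mul, Nat.cast_add, Nat.cast_one, mul_inv_cancel_left₀ hn, sub_self]
    · simp only [partialSum_succ]
      abel
  exact ⟨α, ⟨hsum, hsub⟩, fun β ⟨hβ, hβd⟩ =>
    Fin.eq_of_sum_eq_of_sub_eq (hβ.trans hsum.symm) fun j => (hβd j).trans (hsub j).symm⟩

end ConsecutiveDifferences

noncomputable def zbarSlope (p : ℝ) (k i : ℕ) : ℝ := ((i : ℝ) - ((k : ℝ) + 1) / 2) * ((p - 1) / 2)

noncomputable def solitonRHS (p c₁ : ℝ) (k : ℕ) (α : Fin k → ℝ) (i : ℕ) (s : ℝ) : ℝ :=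
  c₁ *
    ((if i = 1 then 0
      else Real.exp (-(2 / (p - 1)) * (zbar p k α i s - zbar p k α (i - 1) s)))
    - (if i = k then 0
      else Real.exp (-(2 / (p - 1)) * (zbar p k α (i + 1) s - zbar p k α i s))))

section SolitonCenters

variable {p c₁ : ℝ} {k : ℕ} (α : Fin k → ℝ)

theorem zbar_eq_zbarSlope_mul_log_add (i : ℕ) (s : ℝ) :
    zbar p k α i s = zbarSlope p k i * log s + zbar p k α i 1 := by
  simp [zbar, zbarSlope]

theorem zbar_succ_one (i : Fin k) : zbar p k α (i + 1) 1 = α i := by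
  simp [zbar]

theorem zbar_succ_succ_one_sub {n : ℕ} (α : Fin (n + 1) → ℝ) (j : Fin n) :
    zbar p (n + 1) α (j + 1 + 1) 1 - zbar p (n + 1) α (j + 1) 1 = α j.succ - α j.castSucc := by
  rw [← zbar_succ_one α j.succ, ← zbar_succ_one α j.castSucc, Fin.val_succ, Fin.val_castSucc]

theorem hasDerivAt_zbar (i : ℕ) {s : ℝ} (hs : s ≠ 0) :
    HasDerivAt (zbar p k α i) (zbarSlope p k i * s⁻¹) s := by
  rw [funext (zbar_eq_zbarSlope_mul_log_add α i)]
  exact ((hasDerivAt_log hs).const_mul _).add_const _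

theorem exp_zbar_succ_sub_zbar (hp : p ≠ 1) (i : ℕ) {s : ℝ} (hs : 0 < s) :
    exp (-(2 / (p - 1)) * (zbar p k α (i + 1) s - zbar p k α i s))
      = s⁻¹ * exp (-(2 / (p - 1)) * (zbar p k α (i + 1) 1 - zbar p k α i 1)) := by
  have hp' : p - 1 ≠ 0 := sub_ne_zero.mpr hp
  have hgap : -(2 / (p - 1)) * (zbar p k α (i + 1) s - zbar p k α i s)
      = -log s + -(2 / (p - 1)) * (zbar p k α (i + 1) 1 - zbar p k α i 1) := by
    rw [zbar_eq_zbarSlope_mul_log_add α (i + 1) s, zbar_eq_zbarSlope_mul_log_add α i s]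
    simp only [zbarSlope, Nat.cast_add, Nat.cast_one]
    field_simp
    ring
  rw [hgap, exp_add, exp_neg, exp_log hs]

theorem solitonRHS_eq_inv_mul_solitonRHS_one (hp : p ≠ 1) {i : ℕ} (hi : 1 ≤ i) {s : ℝ}
    (hs : 0 < s) : solitonRHS p c₁ k α i s = s⁻¹ * solitonRHS p c₁ k α i 1 := by
  obtain ⟨j, rfl⟩ : ∃ j, i = j + 1 := ⟨i - 1, by omega⟩
  simp only [solitonRHS, Nat.add_sub_cancel, exp_zbar_succ_sub_zbar α hp _ hs]
  split_ifs <;> ring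

theorem forall_hasDerivAt_zbar_iff_solitonRHS_one (hp : p ≠ 1) {i : ℕ} (hi : 1 ≤ i) :
    (∀ s : ℝ, 0 < s → HasDerivAt (zbar p k α i) (solitonRHS p c₁ k α i s) s)
      ↔ solitonRHS p c₁ k α i 1 = zbarSlope p k i := by
  refine ⟨fun h => ?_, fun h s hs => ?_⟩
  · simpa using (h 1 one_pos).unique (hasDerivAt_zbar α i one_ne_zero)
  · rw [solitonRHS_eq_inv_mul_solitonRHS_one α hp hi hs, h, mul_comm]
    exact hasDerivAt_zbar α i hs.ne'

end SolitonCenters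

/-- `w_j = -(λ_1 + ⋯ + λ_j) / c₁` with `λ_i = zbarSlope p k i`. -/
noncomputable def centerWeight (p c₁ : ℝ) (k j : ℕ) : ℝ := (p - 1) / (4 * c₁) * j * (k - j)

section CenterWeight

variable {p c₁ : ℝ} {k : ℕ}

@[simp]
theorem centerWeight_zero : centerWeight p c₁ k 0 = 0 := by simp [centerWeight]

@[simp]
theorem centerWeight_self : centerWeight p c₁ k k = 0 := by simp [centerWeight]

theorem centerWeight_pos (hp : 1 < p) (hc₁ : 0 < c₁) {j : ℕ} (hj : 0 < j) (hjk : j < k) :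
    0 < centerWeight p c₁ k j := by
  have hj' : (0 : ℝ) < j := by exact_mod_cast hj
  have hjk' : (0 : ℝ) < k - j := sub_pos.mpr (by exact_mod_cast hjk)
  have hp' : 0 < p - 1 := sub_pos.mpr hp
  unfold centerWeight
  positivity

theorem mul_centerWeight_sub_succ (hc₁ : c₁ ≠ 0) (j : ℕ) :
    c₁ * (centerWeight p c₁ k j - centerWeight p c₁ k (j + 1)) = zbarSlope p k (j + 1) := by
  simp only [centerWeight, zbarSlope, Nat.cast_add, Nat.cast_one]
  field_simp
  ring

theorem forall_mul_sub_eq_zbarSlope_iff (hc₁ : c₁ ≠ 0) (e : ℕ → ℝ) :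
    (∀ j < k, c₁ * ((if j = 0 then 0 else e j) - (if j + 1 = k then 0 else e (j + 1)))
        = zbarSlope p k (j + 1))
      ↔ ∀ j, 0 < j → j < k → e j = centerWeight p c₁ k j := by
  constructor
  · intro h
    have hweight : ∀ j < k, (if j = 0 then 0 else e j) = centerWeight p c₁ k j := by
      intro j
      induction j with
      | zero => simp
      | succ j ih =>
        intro hj
        have hj := h j (by omega)
        rw [← mul_centerWeight_sub_succ hc₁, ih (by omega), if_neg (by omega)] at hj
        rw [if_neg j.succ_ne_zero]
        linarith [mul_left_cancel₀ hc₁ hj]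
    intro j hj hjk
    simpa [hj.ne'] using hweight j hjk
  · intro h j hjk
    rw [← mul_centerWeight_sub_succ hc₁]
    congr 2
    · split_ifs with hj
      · simp [hj]
      · exact h j (by omega) hjk
    · split_ifs with hj
      · simp [← hj]
      · exact h (j + 1) j.succ_pos (by omega)

end CenterWeight

theorem exp_neg_div_mul_eq_iff {p w : ℝ} (hp : p ≠ 1) (hw : 0 < w) (x : ℝ) :
    exp (-(2 / (p - 1)) * x) = w ↔ x = -((p - 1) / 2) * log w := by
  have hp' : p - 1 ≠ 0 := sub_ne_zero.mpr hp
  rw [← exp_log hw, exp_eq_exp, log_exp]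
  constructor <;> intro h
  · rw [← h]; field_simp
  · rw [h]; field_simp

theorem forall_hasDerivAt_zbar_iff_sub_eq {p c₁ : ℝ} (hp : 1 < p) (hc₁ : 0 < c₁) {n : ℕ}
    (α : Fin (n + 1) → ℝ) :
    (∀ s : ℝ, 0 < s → ∀ i : ℕ, 1 ≤ i → i ≤ n + 1 →
        HasDerivAt (fun t => zbar p (n + 1) α i t) (solitonRHS p c₁ (n + 1) α i s) s)
      ↔ ∀ j : Fin n,
        α j.succ - α j.castSucc = -((p - 1) / 2) * log (centerWeight p c₁ (n + 1) (j + 1)) := by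
  calc _ ↔ ∀ j < n + 1, solitonRHS p c₁ (n + 1) α (j + 1) 1 = zbarSlope p (n + 1) (j + 1) := by
        refine ⟨fun h j hj => ?_, fun h s hs i hi hin => ?_⟩
        · exact (forall_hasDerivAt_zbar_iff_solitonRHS_one α hp.ne' j.succ_pos).mp
            fun s hs => h s hs (j + 1) j.succ_pos hj
        · obtain ⟨j, rfl⟩ : ∃ j, i = j + 1 := ⟨i - 1, by omega⟩
          exact (forall_hasDerivAt_zbar_iff_solitonRHS_one α hp.ne' hi).mpr (h j (by omega)) s hs
    _ ↔ ∀ j, 0 < j → j < n + 1 →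
          exp (-(2 / (p - 1)) * (zbar p (n + 1) α (j + 1) 1 - zbar p (n + 1) α j 1))
            = centerWeight p c₁ (n + 1) j := by
        simp only [solitonRHS, Nat.add_sub_cancel, Nat.add_eq_right]
        exact forall_mul_sub_eq_zbarSlope_iff hc₁.ne' _
    _ ↔ _ := by
        refine ⟨fun h j => ?_, fun h j hj hjn => ?_⟩
        · rw [← zbar_succ_succ_one_sub (p := p), ← exp_neg_div_mul_eq_iff hp.ne'
            (centerWeight_pos hp hc₁ (j := j + 1) j.succ_pos (by omega))]
          exact h (j + 1) j.succ_pos (by omega)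
        · obtain ⟨m, rfl⟩ : ∃ m, j = m + 1 := ⟨j - 1, by omega⟩
          rw [exp_neg_div_mul_eq_iff hp.ne' (centerWeight_pos hp hc₁ hj hjn)]
          exact (zbar_succ_succ_one_sub α ⟨m, by omega⟩).trans (h ⟨m, by omega⟩)

/-- There is a unique vector `(ᾱ₁,…,ᾱ_k)` with zero sum such that the functions
`ζ̄_i(s) = (i - (k+1)/2)((p-1)/2) log s + ᾱ_i` solve the ODE system
`(1/c₁) ζ̄_i' = e^{-(2/(p-1))(ζ̄_i - ζ̄_{i-1})} - e^{-(2/(p-1))(ζ̄_{i+1} - ζ̄_i)}`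
for all `s > 0` and `i = 1,…,k`, where the first exponential is replaced by `0`
when `i = 1` and the second one by `0` when `i = k`. -/
theorem unique_explicit_soliton_centers (p c₁ : ℝ) (hp : 1 < p) (hc₁ : 0 < c₁)
    (k : ℕ) (hk : 2 ≤ k) :
    ∃! α : Fin k → ℝ,
      (∑ i, α i = 0) ∧
      ∀ s : ℝ, 0 < s → ∀ i : ℕ, 1 ≤ i → i ≤ k →
        HasDerivAt (fun t => zbar p k α i t)
          (c₁ *
            ((if i = 1 then 0
              else Real.exp (-(2 / (p - 1)) * (zbar p k α i s - zbar p k α (i - 1) s)))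
            - (if i = k then 0
              else Real.exp (-(2 / (p - 1)) * (zbar p k α (i + 1) s - zbar p k α i s))))) s := by
  obtain ⟨n, rfl⟩ : ∃ n, k = n + 1 := ⟨k - 1, by omega⟩
  exact (existsUnique_congr fun α =>
    and_congr_right' (forall_hasDerivAt_zbar_iff_sub_eq hp hc₁ α)).mpr
      (Fin.existsUnique_sum_eq_zero_and_sub_eq _)
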